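/- Let X be a real n×p matrix, y ∈ ℝⁿ, λ₂ > 0, λ a real with 0 ≤ λ ≤ λ_min(XᵀX), and k an integer with 1 ≤ k ≤ p. Let γ̂ = (XᵀX + λ₂I)⁻¹Xᵀy. Then for every γ ∈ ℝᵖ with at most k nonzero entries, L_ridge(γ) ≥ L_ridge(γ̂) + (λ₂ + λ) · min_{S ⊆ {1,…,p}, |S| = p − k} Σ_{j ∈ S} γ̂_j². -/

import Mathlib

open Matrix

noncomputable section

theorem XtX_isHermitian {n p : ℕ} (X : Matrix (Fin n) (Fin p) ℝ) :
    (Xᵀ * X).IsHermitian := by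
  simpa using Matrix.isHermitian_conjTranspose_mul_self X

/-- The smallest eigenvalue `λ_min(XᵀX)`. -/
def lamMin {n p : ℕ} (X : Matrix (Fin n) (Fin p) ℝ) : ℝ :=
  ⨅ i, (XtX_isHermitian X).eigenvalues i

/-- The ridge loss `L_ridge(β) = βᵀXᵀXβ − 2yᵀXβ + λ₂‖β‖₂²`. -/
def Lridge {n p : ℕ} (X : Matrix (Fin n) (Fin p) ℝ) (y : Fin n → ℝ) (lam2 : ℝ)
    (β : Fin p → ℝ) : ℝ :=
  β ⬝ᵥ (Xᵀ * X).mulVec β - 2 * (y ⬝ᵥ X.mulVec β) + lam2 * ∑ j, (β j) ^ 2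

/-- The ridge minimizer `γ̂ = (XᵀX + λ₂ I)⁻¹ Xᵀ y`. -/
def ridgeMin {n p : ℕ} (X : Matrix (Fin n) (Fin p) ℝ) (y : Fin n → ℝ) (lam2 : ℝ) :
    Fin p → ℝ :=
  (Xᵀ * X + lam2 • (1 : Matrix (Fin p) (Fin p) ℝ))⁻¹.mulVec (Xᵀ.mulVec y)

/-- Rayleigh-type lower bound: `(⨅ i, eig i) * ‖x‖² ≤ xᵀ M x` for Hermitian `M`. -/
lemma rayleigh_lower {p : ℕ} (hp : 0 < p) (M : Matrix (Fin p) (Fin p) ℝ)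
    (hM : M.IsHermitian) (x : Fin p → ℝ) :
    (⨅ i, hM.eigenvalues i) * (x ⬝ᵥ x) ≤ x ⬝ᵥ M.mulVec x := by
  haveI : Nonempty (Fin p) := ⟨⟨0, hp⟩⟩
  set U : Matrix (Fin p) (Fin p) ℝ := (hM.eigenvectorUnitary : Matrix (Fin p) (Fin p) ℝ) with hUdef
  have hstar : star U = Uᵀ := by
    rw [Matrix.star_eq_conjTranspose, Matrix.conjTranspose_eq_transpose_of_trivial]
  have hU : U * Uᵀ = 1 := by
    rw [← hstar]
    exact (Matrix.mem_unitaryGroup_iff).mp hM.eigenvectorUnitary.2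
  set c : Fin p → ℝ := x ᵥ* U with hc
  have hxx : x ⬝ᵥ x = c ⬝ᵥ c := by
    have : c ⬝ᵥ c = c ⬝ᵥ Uᵀ *ᵥ x := by rw [mulVec_transpose]
    rw [this, dotProduct_mulVec, hc, vecMul_vecMul, hU, vecMul_one]
  set e : Fin p → ℝ := hM.eigenvalues with he
  have hspec : M = U * diagonal e * Uᵀ := by
    have := hM.spectral_theorem
    rw [Unitary.conjStarAlgAut_apply, ← hUdef, hstar] at this
    simpa [he] using this
  have hquad : x ⬝ᵥ M.mulVec x = ∑ i, e i * (c i)^2 := by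
    rw [hspec, ← Matrix.mulVec_mulVec, ← Matrix.mulVec_mulVec, dotProduct_mulVec, ← hc,
      mulVec_transpose, ← hc, dotProduct_mulVec]
    simp only [Matrix.vecMul_diagonal, dotProduct]
    exact Finset.sum_congr rfl fun i _ => by ring
  rw [hquad, hxx]
  have hbdd : BddBelow (Set.range e) := Set.Finite.bddBelow (Set.finite_range _)
  have hle : ∀ i, (⨅ j, e j) ≤ e i := fun i => ciInf_le hbdd i
  calc (⨅ j, e j) * (c ⬝ᵥ c) = ∑ i, (⨅ j, e j) * (c i)^2 := by
        simp only [dotProduct, Finset.mul_sum]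
        exact Finset.sum_congr rfl fun i _ => by ring
    _ ≤ ∑ i, e i * (c i)^2 :=
        Finset.sum_le_sum fun i _ => mul_le_mul_of_nonneg_right (hle i) (sq_nonneg _)

/-- Every `k`-sparse `γ` has ridge loss at least the ridge loss of the ridge minimizer `γ̂` plus
`(λ₂+λ)` times the sum of the `p − k` smallest squared entries of `γ̂`. -/
theorem stmt5 {n p : ℕ} (X : Matrix (Fin n) (Fin p) ℝ) (y : Fin n → ℝ)
    (lam2 : ℝ) (hlam2 : 0 < lam2)
    (lam : ℝ) (hlam0 : 0 ≤ lam) (hlam : lam ≤ lamMin X)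
    (k : ℕ) (hk1 : 1 ≤ k) (hkp : k ≤ p) :
    ∀ γ : Fin p → ℝ, (Function.support γ).ncard ≤ k →
      Lridge X y lam2 (ridgeMin X y lam2)
          + (lam2 + lam) * sInf {r : ℝ | ∃ S : Finset (Fin p),
              S.card = p - k ∧ r = ∑ j ∈ S, (ridgeMin X y lam2 j) ^ 2}
        ≤ Lridge X y lam2 γ := by
  intro γ hγ
  have hp : 0 < p := lt_of_lt_of_le hk1 hkp
  set A : Matrix (Fin p) (Fin p) ℝ := Xᵀ * X + lam2 • (1 : Matrix (Fin p) (Fin p) ℝ) with hA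
  set b : Fin p → ℝ := Xᵀ.mulVec y with hb
  set γhat : Fin p → ℝ := ridgeMin X y lam2 with hγhat
  -- A is positive definite
  have hApd : A.PosDef := by
    apply Matrix.PosDef.posSemidef_add
    · simpa using Matrix.posSemidef_conjTranspose_mul_self X
    · rw [Matrix.smul_one_eq_diagonal]
      exact Matrix.posDef_diagonal_iff.mpr fun _ => hlam2
  have hAherm : A.IsHermitian := hApd.isHermitian
  have hAT : Aᵀ = A := by
    have := hAherm
    rwa [Matrix.IsHermitian, Matrix.conjTranspose_eq_transpose_of_trivial] at this
  -- γ̂ solves A γ̂ = b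
  have hsolve : A.mulVec γhat = b := by
    rw [hγhat, ridgeMin, ← hb, ← hA, Matrix.mulVec_mulVec, Matrix.mul_nonsing_inv _ ((Matrix.isUnit_iff_isUnit_det _).mp hApd.isUnit),
      Matrix.one_mulVec]
  -- Lridge in terms of A
  have hL : ∀ β : Fin p → ℝ, Lridge X y lam2 β = β ⬝ᵥ A.mulVec β - 2 * (b ⬝ᵥ β) := by
    intro β
    rw [Lridge, hA, Matrix.add_mulVec, dotProduct_add]
    have h1 : y ⬝ᵥ X.mulVec β = b ⬝ᵥ β := by
      rw [hb, mulVec_transpose, dotProduct_mulVec]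
    have h2 : β ⬝ᵥ (lam2 • (1 : Matrix (Fin p) (Fin p) ℝ)).mulVec β = lam2 * ∑ j, (β j)^2 := by
      rw [Matrix.smul_mulVec, Matrix.one_mulVec, dotProduct_smul, smul_eq_mul]
      congr 1
      simp only [dotProduct]
      exact Finset.sum_congr rfl fun i _ => (pow_two (β i)).symm
    rw [h1, h2]
    ring
  -- symmetry of the bilinear form
  have hsym : ∀ u v : Fin p → ℝ, u ⬝ᵥ A.mulVec v = v ⬝ᵥ A.mulVec u := by
    intro u v
    rw [dotProduct_mulVec, ← Matrix.mulVec_transpose, hAT, dotProduct_comm]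
  -- expansion
  set δ : Fin p → ℝ := γ - γhat with hδ
  have hexp : Lridge X y lam2 γ = Lridge X y lam2 γhat + δ ⬝ᵥ A.mulVec δ := by
    rw [hL, hL]
    have e1 : δ ⬝ᵥ A.mulVec δ
        = γ ⬝ᵥ A.mulVec γ - γ ⬝ᵥ A.mulVec γhat - γhat ⬝ᵥ A.mulVec γ + γhat ⬝ᵥ A.mulVec γhat := by
      rw [hδ]
      simp only [Matrix.mulVec_sub, dotProduct_sub, sub_dotProduct]
      ring
    have e2 : γhat ⬝ᵥ A.mulVec γ = b ⬝ᵥ γ := by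
      rw [hsym, hsolve, dotProduct_comm]
    have e3 : γ ⬝ᵥ A.mulVec γhat = b ⬝ᵥ γ := by
      rw [hsolve, dotProduct_comm]
    have e4 : γhat ⬝ᵥ A.mulVec γhat = b ⬝ᵥ γhat := by
      rw [hsolve, dotProduct_comm]
    rw [e1, e2, e3, e4]
    ring
  -- quadratic lower bound
  have hquad : (lam2 + lam) * (δ ⬝ᵥ δ) ≤ δ ⬝ᵥ A.mulVec δ := by
    have hray : lam * (δ ⬝ᵥ δ) ≤ δ ⬝ᵥ (Xᵀ * X).mulVec δ := by
      have h1 := rayleigh_lower hp (Xᵀ * X) (XtX_isHermitian X) δ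
      have hdd : 0 ≤ δ ⬝ᵥ δ := Finset.sum_nonneg fun i _ => mul_self_nonneg _
      calc lam * (δ ⬝ᵥ δ) ≤ lamMin X * (δ ⬝ᵥ δ) := mul_le_mul_of_nonneg_right hlam hdd
        _ ≤ _ := h1
    have h2 : δ ⬝ᵥ A.mulVec δ = δ ⬝ᵥ (Xᵀ * X).mulVec δ + lam2 * (δ ⬝ᵥ δ) := by
      rw [hA, Matrix.add_mulVec, dotProduct_add, Matrix.smul_mulVec,
        Matrix.one_mulVec, dotProduct_smul, smul_eq_mul]
    rw [h2]
    nlinarith [hray]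
  -- the sparse support set
  classical
  set T : Finset (Fin p) := Finset.univ.filter (fun j => γ j ≠ 0) with hT
  have hTcard : T.card ≤ k := by
    have : Function.support γ = ↑T := by
      ext j; simp [hT, Function.mem_support]
    rw [this, Set.ncard_coe_finset] at hγ
    exact hγ
  have hcompl : p - k ≤ Tᶜ.card := by
    rw [Finset.card_compl, Fintype.card_fin]
    omega
  obtain ⟨S, hS_sub, hS_card⟩ := Finset.exists_subset_card_eq hcompl
  -- sum over S is at most ‖δ‖²
  have hSsum : ∑ j ∈ S, (γhat j)^2 ≤ δ ⬝ᵥ δ := by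
    have h1 : δ ⬝ᵥ δ = ∑ j, (δ j)^2 := by
      simp only [dotProduct]
      exact Finset.sum_congr rfl fun i _ => (pow_two (δ i)).symm
    rw [h1]
    have h2 : ∀ j ∈ S, (γhat j)^2 = (δ j)^2 := by
      intro j hj
      have : γ j = 0 := by
        have := hS_sub hj
        simp [hT] at this
        exact this
      rw [hδ]
      simp [this]
    rw [Finset.sum_congr rfl h2]
    exact Finset.sum_le_sum_of_subset_of_nonneg (Finset.subset_univ S)
      (fun j _ _ => sq_nonneg _)
  -- sInf bound
  set R : Set ℝ := {r : ℝ | ∃ S : Finset (Fin p),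
      S.card = p - k ∧ r = ∑ j ∈ S, (ridgeMin X y lam2 j) ^ 2} with hR
  have hmem : (∑ j ∈ S, (γhat j)^2) ∈ R := ⟨S, hS_card, rfl⟩
  have hbdd : BddBelow R := by
    refine ⟨0, fun r hr => ?_⟩
    obtain ⟨S', _, rfl⟩ := hr
    exact Finset.sum_nonneg fun j _ => sq_nonneg _
  have hsinf : sInf R ≤ ∑ j ∈ S, (γhat j)^2 := csInf_le hbdd hmem
  -- conclude
  have hll : 0 ≤ lam2 + lam := by linarith
  calc Lridge X y lam2 γhat + (lam2 + lam) * sInf R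
      ≤ Lridge X y lam2 γhat + (lam2 + lam) * (∑ j ∈ S, (γhat j)^2) := by
        have := mul_le_mul_of_nonneg_left hsinf hll
        linarith
    _ ≤ Lridge X y lam2 γhat + (lam2 + lam) * (δ ⬝ᵥ δ) := by
        have := mul_le_mul_of_nonneg_left hSsum hll
        linarith
    _ ≤ Lridge X y lam2 γhat + δ ⬝ᵥ A.mulVec δ := by linarith [hquad]
    _ = Lridge X y lam2 γ := hexp.symm
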